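/- arXiv:1802.07558 — 5 statements merged into one kernel-verified Lean document; each statement's English description precedes it below -/
import Mathlib

section
/- For positive reals a ≥ b > 0, AGM(a, b) satisfies the integral identity 1/AGM(a,b) = (2/π) ∫_0^{π/2} dθ / sqrt(a² cos²θ + b² sin²θ). -/
noncomputable def AGM (a b : ℝ) : ℝ :=
  Filter.limUnder Filter.atTop
    (fun n => ((fun p : ℝ × ℝ => ((p.1 + p.2) / 2, Real.sqrt (p.1 * p.2)))^[n] (a, b)).1)

open Real

/-!
Substituting `x = b tan θ` writes `I(a, b) = ∫_0^{π/2} dθ / √(a² cos² θ + b² sin² θ)` as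
`∫_0^∞ dx / √((x² + a²)(x² + b²))`, and Landen's substitution `x = (t - ab/t)/2` shows that
this integral is unchanged when `(a, b)` is replaced by `((a + b)/2, √(ab))`. Hence
`I(a, b) = I(aₙ, bₙ)` along the AGM iteration, and `π/(2aₙ) ≤ I(aₙ, bₙ) ≤ π/(2bₙ)` squeezes
`I(a, b)` to `π/(2 AGM(a, b))`.
-/

open MeasureTheory Set Filter Topology
open scoped NNReal

section ChangeOfVariables

variable {E : Type*} [NormedAddCommGroup E] [NormedSpace ℝ E]

lemma image_mul_tan_Ioo {b : ℝ} (hb : 0 < b) : (b * tan ·) '' Ioo 0 (π / 2) = Ioi 0 := by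
  refine Subset.antisymm ?_ fun y (hy : 0 < y) ↦ ?_
  · rintro _ ⟨θ, hθ, rfl⟩
    exact mul_pos hb (tan_pos_of_pos_of_lt_pi_div_two hθ.1 hθ.2)
  · refine ⟨arctan (y / b), ⟨?_, arctan_lt_pi_div_two _⟩, ?_⟩
    · simpa using arctan_strictMono (div_pos hy hb)
    · simp only [tan_arctan]
      field_simp

lemma integral_Ioi_eq_integral_mul_tan {b : ℝ} (hb : 0 < b) (f : ℝ → E) :
    ∫ x in Ioi 0, f x = ∫ θ in Ioo 0 (π / 2), (b / cos θ ^ 2) • f (b * tan θ) := by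
  have hcos : ∀ θ ∈ Ioo 0 (π / 2), 0 < cos θ := fun θ hθ ↦
    cos_pos_of_mem_Ioo ⟨by linarith [hθ.1, pi_div_two_pos], hθ.2⟩
  rw [← image_mul_tan_Ioo hb, integral_image_eq_integral_abs_deriv_smul measurableSet_Ioo
    (f' := fun θ ↦ b / cos θ ^ 2)]
  · refine setIntegral_congr_fun measurableSet_Ioo fun θ hθ ↦ ?_
    rw [abs_of_pos (div_pos hb (pow_pos (hcos θ hθ) 2))]
  · intro θ hθ
    refine (((hasDerivAt_tan (hcos θ hθ).ne').const_mul b).congr_deriv ?_).hasDerivWithinAt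
    rw [one_div, div_eq_mul_inv]
  · intro x hx y hy h
    have hsub : Ioo 0 (π / 2) ⊆ Ioo (-(π / 2)) (π / 2) :=
      Ioo_subset_Ioo_left (by linarith [pi_pos])
    exact injOn_tan (hsub hx) (hsub hy) (mul_left_cancel₀ hb.ne' h)


lemma image_sub_div_Ioi {c : ℝ} (hc : 0 < c) : (fun t ↦ (t - c / t) / 2) '' Ioi 0 = univ := by
  refine eq_univ_of_forall fun x ↦ ?_
  have hs : |x| < √(x ^ 2 + c) := by
    rw [← sqrt_sq_eq_abs]
    exact sqrt_lt_sqrt (sq_nonneg x) (by linarith)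
  have ht : 0 < x + √(x ^ 2 + c) := by linarith [neg_le_abs x]
  refine ⟨x + √(x ^ 2 + c), ht, ?_⟩
  have hsq := sq_sqrt (by positivity : 0 ≤ x ^ 2 + c)
  field_simp
  nlinarith

lemma injOn_sub_div_Ioi {c : ℝ} (hc : 0 < c) : InjOn (fun t ↦ (t - c / t) / 2) (Ioi 0) := by
  intro x (hx : 0 < x) y (hy : 0 < y) h
  have : (x - y) * (x * y + c) = 0 := by
    field_simp at h
    linear_combination h
  exact sub_eq_zero.1 ((mul_eq_zero.1 this).resolve_right (by positivity))

lemma integral_eq_integral_Ioi_sub_div {c : ℝ} (hc : 0 < c) (f : ℝ → E) :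
    ∫ x, f x = ∫ t in Ioi 0, ((1 + c / t ^ 2) / 2) • f ((t - c / t) / 2) := by
  rw [← setIntegral_univ, ← image_sub_div_Ioi hc, integral_image_eq_integral_abs_deriv_smul
    measurableSet_Ioi (f' := fun t ↦ (1 + c / t ^ 2) / 2) _ (injOn_sub_div_Ioi hc)]
  · refine setIntegral_congr_fun measurableSet_Ioi fun t _ ↦ ?_
    rw [abs_of_pos (by positivity)]
  · intro t (ht : 0 < t)
    have hderiv := ((hasDerivAt_id t).sub
      ((hasDerivAt_const t c).div (hasDerivAt_id t) ht.ne')).div_const 2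
    refine (hderiv.congr_deriv ?_).hasDerivWithinAt
    simp only [id_eq]
    ring

end ChangeOfVariables

noncomputable def ellipticIntegral (a b : ℝ) : ℝ :=
  ∫ θ in 0..π / 2, 1 / √(a ^ 2 * cos θ ^ 2 + b ^ 2 * sin θ ^ 2)

lemma integral_Ioi_inv_sqrt_eq_ellipticIntegral {a b : ℝ} (ha : 0 < a) (hb : 0 < b) :
    ∫ x in Ioi 0, 1 / √((x ^ 2 + a ^ 2) * (x ^ 2 + b ^ 2)) = ellipticIntegral a b := by
  rw [ellipticIntegral, intervalIntegral.integral_of_le pi_div_two_pos.le,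
    integral_Ioc_eq_integral_Ioo, integral_Ioi_eq_integral_mul_tan hb]
  refine setIntegral_congr_fun measurableSet_Ioo fun θ hθ ↦ ?_
  have hcos : 0 < cos θ := cos_pos_of_mem_Ioo ⟨by linarith [hθ.1, pi_div_two_pos], hθ.2⟩
  set D := a ^ 2 * cos θ ^ 2 + b ^ 2 * sin θ ^ 2
  have hD : 0 < D := by positivity
  have hprod :
      ((b * tan θ) ^ 2 + a ^ 2) * ((b * tan θ) ^ 2 + b ^ 2) = (b * √D / cos θ ^ 2) ^ 2 := by
    simp only [div_pow, mul_pow, sq_sqrt hD.le]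
    rw [tan_eq_sin_div_cos]
    field_simp
    linear_combination ((b ^ 2 * sin θ ^ 2 + a ^ 2 * cos θ ^ 2) * sin_sq_add_cos_sq θ)
  rw [hprod, sqrt_sq (by positivity), smul_eq_mul]
  field_simp

lemma integral_Ioi_inv_sqrt_agm_step {a b : ℝ} (ha : 0 < a) (hb : 0 < b) :
    ∫ x in Ioi 0, 1 / √((x ^ 2 + ((a + b) / 2) ^ 2) * (x ^ 2 + √(a * b) ^ 2)) =
      ∫ x in Ioi 0, 1 / √((x ^ 2 + a ^ 2) * (x ^ 2 + b ^ 2)) := by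
  set g := fun x : ℝ ↦ 1 / √((x ^ 2 + ((a + b) / 2) ^ 2) * (x ^ 2 + √(a * b) ^ 2))
  have heven : ∫ x, g x = 2 * ∫ x in Ioi 0, g x := by
    simp_rw [← integral_comp_abs (f := g), g, sq_abs]
  have hsubst : ∀ t > 0, ((1 + a * b / t ^ 2) / 2) • g ((t - a * b / t) / 2) =
      2 * (1 / √((t ^ 2 + a ^ 2) * (t ^ 2 + b ^ 2))) := by
    intro t ht
    have hP : 0 < (t ^ 2 + a ^ 2) * (t ^ 2 + b ^ 2) := by positivity
    have hprod : (((t - a * b / t) / 2) ^ 2 + ((a + b) / 2) ^ 2) *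
        (((t - a * b / t) / 2) ^ 2 + √(a * b) ^ 2) =
          (√((t ^ 2 + a ^ 2) * (t ^ 2 + b ^ 2)) * (t ^ 2 + a * b) / (4 * t ^ 2)) ^ 2 := by
      simp only [div_pow, mul_pow, sq_sqrt hP.le, sq_sqrt (mul_pos ha hb).le]
      field_simp
      ring
    simp only [g, smul_eq_mul]
    rw [hprod, sqrt_sq (by positivity)]
    field_simp
    norm_num
  have := (integral_eq_integral_Ioi_sub_div (mul_pos ha hb) g).symm
  rw [heven, setIntegral_congr_fun measurableSet_Ioi hsubst, integral_const_mul] at this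
  linarith

lemma sqrt_mul_cos_sq_add_mul_sin_sq_mem_Icc {a b : ℝ} (hb : 0 ≤ b) (hab : b ≤ a) (θ : ℝ) :
    √(a ^ 2 * cos θ ^ 2 + b ^ 2 * sin θ ^ 2) ∈ Icc b a := by
  have hsq : b ^ 2 ≤ a ^ 2 := pow_le_pow_left₀ hb hab 2
  constructor
  · rw [le_sqrt hb (by positivity)]
    nlinarith [sin_sq_add_cos_sq θ, sq_nonneg (cos θ)]
  · rw [sqrt_le_left (hb.trans hab)]
    nlinarith [sin_sq_add_cos_sq θ, sq_nonneg (sin θ)]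

lemma ellipticIntegral_mem_Icc {a b : ℝ} (hb : 0 < b) (hab : b ≤ a) :
    ellipticIntegral a b ∈ Icc (π / (2 * a)) (π / (2 * b)) := by
  have hbound := sqrt_mul_cos_sq_add_mul_sin_sq_mem_Icc hb.le hab
  have hint : IntervalIntegrable (fun θ ↦ 1 / √(a ^ 2 * cos θ ^ 2 + b ^ 2 * sin θ ^ 2))
      volume 0 (π / 2) :=
    (continuous_const.div (by fun_prop) fun θ ↦
      (hb.trans_le (hbound θ).1).ne').intervalIntegrable _ _
  have hconst (c : ℝ) : π / (2 * c) = ∫ _ in (0 : ℝ)..π / 2, 1 / c := by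
    simp only [intervalIntegral.integral_const, sub_zero, smul_eq_mul]
    ring
  rw [ellipticIntegral, hconst, hconst]
  exact ⟨intervalIntegral.integral_mono_on pi_div_two_pos.le intervalIntegrable_const hint
      fun θ _ ↦ one_div_le_one_div_of_le (hb.trans_le (hbound θ).1) (hbound θ).2,
    intervalIntegral.integral_mono_on pi_div_two_pos.le hint intervalIntegrable_const
      fun θ _ ↦ one_div_le_one_div_of_le hb (hbound θ).1⟩

lemma ellipticIntegral_agm_step {a b : ℝ} (ha : 0 < a) (hb : 0 < b) :
    ellipticIntegral ((a + b) / 2) √(a * b) = ellipticIntegral a b := by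
  rw [← integral_Ioi_inv_sqrt_eq_ellipticIntegral (by positivity) (by positivity),
    integral_Ioi_inv_sqrt_agm_step ha hb, integral_Ioi_inv_sqrt_eq_ellipticIntegral ha hb]

namespace NNReal

variable {a b : ℝ≥0}

lemma agmSequences_fst_pos (ha : 0 < a) (hb : 0 < b) (n : ℕ) : 0 < (agmSequences a b n).1 :=
  (show 0 < sqrt (a * b) by positivity).trans_le (agmSequences_fst_monotone n.zero_le)

lemma ellipticIntegral_agmSequences (ha : 0 < a) (hb : 0 < b) (n : ℕ) :
    ellipticIntegral (agmSequences a b n).2 (agmSequences a b n).1 = ellipticIntegral a b := by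
  induction n with
  | zero =>
    push_cast [agmSequences_zero, coe_sqrt]
    exact ellipticIntegral_agm_step (by positivity) (by positivity)
  | succ n ih =>
    have hp := agmSequences_fst_pos ha hb n
    have hq := hp.trans_le (agmSequences_fst_le_snd n n)
    push_cast [agmSequences_succ', coe_sqrt]
    rw [add_comm, mul_comm, ellipticIntegral_agm_step (by positivity) (by positivity), ih]

end NNReal

-- `agmSequences a b n` is the pair (geometric mean, arithmetic mean) after `n + 1` steps.
lemma iterate_agmStep_succ (a b : ℝ≥0) (n : ℕ) :
    (fun p : ℝ × ℝ => ((p.1 + p.2) / 2, √(p.1 * p.2)))^[n + 1] (a, b) =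
      (((NNReal.agmSequences a b n).2 : ℝ), ((NNReal.agmSequences a b n).1 : ℝ)) := by
  induction n with
  | zero => simp
  | succ n ih =>
    rw [Function.iterate_succ_apply', ih, NNReal.agmSequences_succ']
    simp [add_comm, mul_comm]

lemma AGM_coe_eq_agm (a b : ℝ≥0) : AGM a b = NNReal.agm a b := by
  refine Tendsto.limUnder_eq ((tendsto_add_atTop_iff_nat 1).1 ?_)
  simp_rw [iterate_agmStep_succ]
  exact (NNReal.continuous_coe.tendsto _).comp NNReal.tendsto_agmSequences_snd_agm

theorem agm_integral (a b : ℝ) (hb : 0 < b) (hab : b ≤ a) :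
    1 / AGM a b =
      (2 / π) * ∫ θ in (0 : ℝ)..(π / 2),
        1 / Real.sqrt (a ^ 2 * Real.cos θ ^ 2 + b ^ 2 * Real.sin θ ^ 2) := by
  lift a to ℝ≥0 using (hb.trans_le hab).le
  lift b to ℝ≥0 using hb.le
  change 1 / AGM a b = 2 / π * ellipticIntegral a b
  have ha : 0 < a := hb.trans_le hab
  rw [AGM_coe_eq_agm]
  set M := NNReal.agm a b
  have hM : (0 : ℝ) < M := NNReal.agm_pos ha hb
  have hbounds (n : ℕ) := NNReal.ellipticIntegral_agmSequences ha hb n ▸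
    ellipticIntegral_mem_Icc (NNReal.agmSequences_fst_pos ha hb n)
      (NNReal.agmSequences_fst_le_snd n n)
  have hlim {r : ℕ → ℝ≥0} (hr : Tendsto r atTop (𝓝 M)) :
      Tendsto (fun n ↦ π / (2 * r n)) atTop (𝓝 (π / (2 * M))) :=
    tendsto_const_nhds.div ((NNReal.tendsto_coe.2 hr).const_mul 2) (by positivity)
  have hI : ellipticIntegral a b = π / (2 * M) :=
    le_antisymm (ge_of_tendsto' (hlim NNReal.tendsto_agmSequences_fst_agm) fun n ↦ (hbounds n).2)
      (le_of_tendsto' (hlim NNReal.tendsto_agmSequences_snd_agm) fun n ↦ (hbounds n).1)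
  rw [hI]
  field_simp
end

section
/- The integral I(a,b) = ∫_0^{π/2} dθ / sqrt(a² cos²θ + b² sin²θ) is invariant under one step of the AGM iteration: I(a,b) = I((a+b)/2, sqrt(a*b)) for all positive reals a, b. -/
/-!
The substitution `x = b tan θ` turns `I(a, b)` into `∫₀^∞ dx / √((x² + a²)(x² + b²))`.
Landen's substitution `u = (x - ab/x) / 2` maps `(0, ∞)` bijectively onto `ℝ`, with
`u² + ((a + b)/2)² = (x² + a²)(x² + b²) / (4x²)` and `u² + ab = (x² + ab)² / (4x²)`, so it carries
this integral to one half of `∫_ℝ du / √((u² + ((a + b)/2)²)(u² + ab))`. The latter integrand is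
even, so this half is again the integral over `(0, ∞)`, now for the pair `((a + b)/2, √(ab))`.
-/

open Real MeasureTheory Set

lemma integral_Ioi_eq_integral_Ioo_tan {b : ℝ} (hb : 0 < b) (g : ℝ → ℝ) :
    ∫ x in Ioi 0, g x = ∫ θ in Ioo 0 (π / 2), b / cos θ ^ 2 * g (b * tan θ) := by
  have hsub : Ioo 0 (π / 2) ⊆ Ioo (-(π / 2)) (π / 2) :=
    Ioo_subset_Ioo_left (by linarith [pi_pos])
  have himage : (b * tan ·) '' Ioo 0 (π / 2) = Ioi 0 := by
    ext y
    constructor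
    · rintro ⟨θ, ⟨h0, hπ⟩, rfl⟩
      exact mul_pos hb (tan_pos_of_pos_of_lt_pi_div_two h0 hπ)
    · intro hy
      refine ⟨arctan (y / b), ⟨?_, arctan_lt_pi_div_two _⟩, ?_⟩
      · simpa [arctan_zero] using arctan_strictMono (div_pos hy hb)
      · simp only [tan_arctan]
        field_simp
  have hinj : InjOn (b * tan ·) (Ioo 0 (π / 2)) := fun x hx y hy h =>
    injOn_tan (hsub hx) (hsub hy) (mul_left_cancel₀ hb.ne' h)
  have hderiv : ∀ θ ∈ Ioo 0 (π / 2),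
      HasDerivWithinAt (b * tan ·) (b / cos θ ^ 2) (Ioo 0 (π / 2)) θ := fun θ hθ => by
    rw [← mul_one_div]
    exact ((hasDerivAt_tan (cos_pos_of_mem_Ioo (hsub hθ)).ne').const_mul b).hasDerivWithinAt
  rw [← himage, integral_image_eq_integral_abs_deriv_smul measurableSet_Ioo hderiv hinj]
  refine setIntegral_congr_fun measurableSet_Ioo fun θ hθ => ?_
  rw [smul_eq_mul, abs_of_pos (div_pos hb (pow_pos (cos_pos_of_mem_Ioo (hsub hθ)) 2))]

lemma strictMonoOn_half_sub_div {c : ℝ} (hc : 0 < c) :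
    StrictMonoOn (fun x : ℝ => (x - c / x) / 2) (Ioi 0) := fun _ hx _ _ hxy =>
  div_lt_div_of_pos_right (sub_lt_sub hxy (div_lt_div_of_pos_left hc hx hxy)) two_pos

lemma image_Ioi_half_sub_div {c : ℝ} (hc : 0 < c) :
    (fun x : ℝ => (x - c / x) / 2) '' Ioi 0 = univ := by
  refine eq_univ_of_forall fun u => ⟨u + √(u ^ 2 + c), ?_, ?_⟩
  · have : |u| < √(u ^ 2 + c) := by
      rw [← sqrt_sq_eq_abs]
      exact sqrt_lt_sqrt (sq_nonneg u) (by linarith)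
    rw [mem_Ioi]
    linarith [neg_abs_le u]
  · have hroot : √(u ^ 2 + c) ^ 2 = u ^ 2 + c := sq_sqrt (by positivity)
    have hpos : 0 < u + √(u ^ 2 + c) := by nlinarith [sqrt_nonneg (u ^ 2 + c)]
    field_simp
    nlinarith

lemma hasDerivAt_half_sub_div (c : ℝ) {x : ℝ} (hx : x ≠ 0) :
    HasDerivAt (fun x : ℝ => (x - c / x) / 2) ((1 + c / x ^ 2) / 2) x := by
  rw [show 1 + c / x ^ 2 = 1 - c * -(x ^ 2)⁻¹ by ring]
  exact ((hasDerivAt_id' x).sub ((hasDerivAt_inv hx).const_mul c)).div_const 2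

lemma integral_eq_integral_Ioi_half_sub_div {c : ℝ} (hc : 0 < c) (g : ℝ → ℝ) :
    ∫ u, g u = ∫ x in Ioi 0, (1 + c / x ^ 2) / 2 * g ((x - c / x) / 2) := by
  have hderiv : ∀ x ∈ Ioi (0 : ℝ), HasDerivWithinAt (fun x : ℝ => (x - c / x) / 2)
      ((1 + c / x ^ 2) / 2) (Ioi 0) x := fun x hx =>
    (hasDerivAt_half_sub_div c (ne_of_gt hx)).hasDerivWithinAt
  rw [← setIntegral_univ, ← image_Ioi_half_sub_div hc, integral_image_eq_integral_abs_deriv_smul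
    measurableSet_Ioi hderiv (strictMonoOn_half_sub_div hc).injOn]
  refine setIntegral_congr_fun measurableSet_Ioi fun x _ => ?_
  rw [smul_eq_mul, abs_of_pos (by positivity)]

lemma tan_jacobian_mul_inv_sqrt (a : ℝ) {b θ : ℝ} (hb : 0 < b) (hθ : 0 < cos θ) :
    b / cos θ ^ 2 * (1 / √(((b * tan θ) ^ 2 + a ^ 2) * ((b * tan θ) ^ 2 + b ^ 2))) =
      1 / √(a ^ 2 * cos θ ^ 2 + b ^ 2 * sin θ ^ 2) := by
  have hfactors : ((b * tan θ) ^ 2 + a ^ 2) * ((b * tan θ) ^ 2 + b ^ 2) =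
      (b / cos θ ^ 2 * √(a ^ 2 * cos θ ^ 2 + b ^ 2 * sin θ ^ 2)) ^ 2 := by
    rw [mul_pow (b / cos θ ^ 2), sq_sqrt (by positivity), tan_eq_sin_div_cos]
    field_simp
    rw [sin_sq_add_cos_sq, mul_one, add_comm]
  rw [hfactors, sqrt_sq (by positivity)]
  field_simp

lemma landen_jacobian_mul_inv_sqrt {a b x : ℝ} (hab : 0 ≤ a * b) (hx : 0 < x) :
    (1 + a * b / x ^ 2) / 2 * (1 / √((((x - a * b / x) / 2) ^ 2 + ((a + b) / 2) ^ 2) *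
      (((x - a * b / x) / 2) ^ 2 + a * b))) = 2 * (1 / √((x ^ 2 + a ^ 2) * (x ^ 2 + b ^ 2))) := by
  have hfactors : (((x - a * b / x) / 2) ^ 2 + ((a + b) / 2) ^ 2) *
      (((x - a * b / x) / 2) ^ 2 + a * b) =
      (√((x ^ 2 + a ^ 2) * (x ^ 2 + b ^ 2)) * (x ^ 2 + a * b) / (4 * x ^ 2)) ^ 2 := by
    rw [div_pow (√_ * _), mul_pow (√_), sq_sqrt (by positivity)]
    field_simp
    ring
  rw [hfactors, sqrt_sq (by positivity)]
  field_simp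
  ring

lemma intervalIntegral_inv_sqrt_eq_integral_Ioi (a : ℝ) {b : ℝ} (hb : 0 < b) :
    ∫ θ in (0 : ℝ)..(π / 2), 1 / √(a ^ 2 * cos θ ^ 2 + b ^ 2 * sin θ ^ 2) =
      ∫ x in Ioi 0, 1 / √((x ^ 2 + a ^ 2) * (x ^ 2 + b ^ 2)) := by
  rw [intervalIntegral.integral_of_le (by positivity), integral_Ioc_eq_integral_Ioo,
    integral_Ioi_eq_integral_Ioo_tan hb]
  refine setIntegral_congr_fun measurableSet_Ioo fun θ hθ => ?_
  have hcos : 0 < cos θ := cos_pos_of_mem_Ioo ⟨by linarith [hθ.1, pi_pos], hθ.2⟩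
  exact (tan_jacobian_mul_inv_sqrt a hb hcos).symm

lemma integral_Ioi_inv_sqrt_landen {a b : ℝ} (hab : 0 < a * b) :
    ∫ x in Ioi 0, 1 / √((x ^ 2 + ((a + b) / 2) ^ 2) * (x ^ 2 + a * b)) =
      ∫ x in Ioi 0, 1 / √((x ^ 2 + a ^ 2) * (x ^ 2 + b ^ 2)) := by
  set F : ℝ → ℝ := fun u => 1 / √((u ^ 2 + ((a + b) / 2) ^ 2) * (u ^ 2 + a * b))
  have hF_even : ∀ u, F |u| = F u := fun u => by simp only [F, sq_abs]
  have hF_integral : ∫ u, F u = 2 * ∫ x in Ioi 0, F x := by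
    simpa only [hF_even] using integral_comp_abs (f := F)
  calc ∫ x in Ioi 0, F x
      = (∫ u, F u) / 2 := by rw [hF_integral]; ring
    _ = (∫ x in Ioi 0, 2 * (1 / √((x ^ 2 + a ^ 2) * (x ^ 2 + b ^ 2)))) / 2 := by
      rw [integral_eq_integral_Ioi_half_sub_div hab]
      exact congrArg (· / 2) (setIntegral_congr_fun measurableSet_Ioi fun x hx =>
        landen_jacobian_mul_inv_sqrt hab.le hx)
    _ = ∫ x in Ioi 0, 1 / √((x ^ 2 + a ^ 2) * (x ^ 2 + b ^ 2)) := by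
      rw [integral_const_mul]
      ring

theorem landen_invariance (a b : ℝ) (ha : 0 < a) (hb : 0 < b) :
    (∫ θ in (0 : ℝ)..(π / 2),
        1 / Real.sqrt (a ^ 2 * Real.cos θ ^ 2 + b ^ 2 * Real.sin θ ^ 2)) =
      ∫ θ in (0 : ℝ)..(π / 2),
        1 / Real.sqrt (((a + b) / 2) ^ 2 * Real.cos θ ^ 2 +
          Real.sqrt (a * b) ^ 2 * Real.sin θ ^ 2) := by
  have hab : 0 < a * b := mul_pos ha hb
  rw [intervalIntegral_inv_sqrt_eq_integral_Ioi a hb,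
    intervalIntegral_inv_sqrt_eq_integral_Ioi _ (sqrt_pos.2 hab), sq_sqrt hab.le,
    integral_Ioi_inv_sqrt_landen hab]
end

section
/- For real q with 0 < q < 1: (θ_3(q)² + θ_4(q)²)/2 = θ_3(q²)² and sqrt(θ_3(q)² · θ_4(q)²) = θ_4(q²)². Hence the pair (θ_3(q)², θ_4(q)²) maps under one AGM step to (θ_3(q²)², θ_4(q²)²). -/
/-!
Write `θ(s, q) = ∑ₙ sⁿ q^(n²)`, so that `θ₃ = θ(1, ·)` and `θ₄ = θ(-1, ·)`. In the Cauchy product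
`θ(s, q) θ(t, q) + θ(-s, q) θ(-t, q)` the terms with `m + n` odd cancel and the others are doubled;
substituting `m = u + v`, `n = u - v` turns `m² + n²` into `2u² + 2v²` and `sᵐ tⁿ` into
`(st)ᵘ (s/t)ᵛ`, so the sum is `2 θ(st, q²) θ(s/t, q²)`. Taking `s = t = 1` gives the arithmetic
mean, and `s = 1, t = -1` gives `θ₃(q) θ₄(q) = θ₄(q²)²`, which is the geometric mean since it is
nonnegative.
-/

noncomputable def theta2 (q : ℝ) : ℝ := ∑' n : ℤ, q ^ (((n : ℝ) + 1 / 2) ^ 2)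

noncomputable def theta3 (q : ℝ) : ℝ := ∑' n : ℤ, q ^ (n.natAbs ^ 2)

noncomputable def theta4 (q : ℝ) : ℝ := ∑' n : ℤ, (-1 : ℝ) ^ n * q ^ (n.natAbs ^ 2)

noncomputable def signedTheta (s q : ℝ) : ℝ := ∑' n : ℤ, s ^ n * q ^ (n.natAbs ^ 2)

theorem theta3_eq_signedTheta (q : ℝ) : theta3 q = signedTheta 1 q := by
  simp only [theta3, signedTheta, one_zpow, one_mul]

theorem theta4_eq_signedTheta (q : ℝ) : theta4 q = signedTheta (-1) q := rfl

theorem summable_norm_signedTheta_term {s q : ℝ} (hs : |s| = 1) (hq : |q| < 1) :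
    Summable fun n : ℤ => ‖s ^ n * q ^ (n.natAbs ^ 2)‖ := by
  simp only [norm_mul, norm_zpow, Real.norm_eq_abs, hs, one_zpow, one_mul, abs_pow]
  have hq0 := abs_nonneg q
  apply Summable.of_nat_of_neg <;>
  · refine (summable_geometric_of_lt_one hq0 hq).of_nonneg_of_le (fun n => by positivity)
      fun n => ?_
    simp only [Int.natAbs_neg, Int.natAbs_natCast]
    exact pow_le_pow_of_le_one hq0 hq.le (Nat.le_self_pow two_ne_zero n)

theorem tsum_comp_add_sub {M : Type*} [AddCommMonoid M] [TopologicalSpace M] (F : ℤ × ℤ → M)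
    (hF : ∀ m n : ℤ, Odd (m + n) → F (m, n) = 0) :
    ∑' p : ℤ × ℤ, F (p.1 + p.2, p.1 - p.2) = ∑' p, F p := by
  refine Function.Injective.tsum_eq (g := fun p : ℤ × ℤ => (p.1 + p.2, p.1 - p.2)) ?_ ?_
  · rintro ⟨a, b⟩ ⟨c, d⟩ h
    simp only [Prod.mk.injEq] at h ⊢
    omega
  · rintro ⟨m, n⟩ hmn
    obtain ⟨k, hk⟩ := (Int.even_or_odd (m + n)).resolve_right fun h => hmn (hF m n h)
    exact ⟨(k, m - k), by simp only [Prod.mk.injEq]; omega⟩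

theorem natAbs_add_sq_add_natAbs_sub_sq (u v : ℤ) :
    (u + v).natAbs ^ 2 + (u - v).natAbs ^ 2 = 2 * u.natAbs ^ 2 + 2 * v.natAbs ^ 2 := by
  zify
  simp only [sq_abs]
  ring

theorem signedTheta_term_mul_add {s t q : ℝ} (m n : ℤ) :
    s ^ m * q ^ (m.natAbs ^ 2) * (t ^ n * q ^ (n.natAbs ^ 2)) +
        (-s) ^ m * q ^ (m.natAbs ^ 2) * ((-t) ^ n * q ^ (n.natAbs ^ 2)) =
      (1 + (-1) ^ (m + n)) * (s ^ m * t ^ n * q ^ (m.natAbs ^ 2 + n.natAbs ^ 2)) := by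
  rw [neg_eq_neg_one_mul s, neg_eq_neg_one_mul t, mul_zpow, mul_zpow,
    zpow_add₀ (by norm_num : (-1 : ℝ) ≠ 0), pow_add]
  ring

theorem zpow_add_mul_zpow_sub {s t : ℝ} (hs : s ≠ 0) (ht : t ≠ 0) (u v : ℤ) :
    s ^ (u + v) * t ^ (u - v) = (s * t) ^ u * (s / t) ^ v := by
  rw [zpow_add₀ hs, zpow_sub₀ ht, mul_zpow, div_zpow]
  field_simp

theorem signedTheta_mul_add_signedTheta_mul {s t q : ℝ} (hs : |s| = 1) (ht : |t| = 1)
    (hq : |q| < 1) :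
    signedTheta s q * signedTheta t q + signedTheta (-s) q * signedTheta (-t) q =
      2 * (signedTheta (s * t) (q ^ 2) * signedTheta (s / t) (q ^ 2)) := by
  have hq2 : |q ^ 2| < 1 := by rw [abs_pow]; exact pow_lt_one₀ (abs_nonneg q) hq two_ne_zero
  have hs' := summable_norm_signedTheta_term (s := s) hs hq
  have ht' := summable_norm_signedTheta_term (s := t) ht hq
  have hns' := summable_norm_signedTheta_term (s := -s) (by rwa [abs_neg]) hq
  have hnt' := summable_norm_signedTheta_term (s := -t) (by rwa [abs_neg]) hq
  have hst' := summable_norm_signedTheta_term (s := s * t) (by rw [abs_mul, hs, ht, one_mul]) hq2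
  have hsdt' := summable_norm_signedTheta_term (s := s / t) (by rw [abs_div, hs, ht, div_one]) hq2
  simp only [signedTheta]
  rw [tsum_mul_tsum_of_summable_norm hs' ht', tsum_mul_tsum_of_summable_norm hns' hnt',
    tsum_mul_tsum_of_summable_norm hst' hsdt',
    ← (summable_mul_of_summable_norm hs' ht').tsum_add (summable_mul_of_summable_norm hns' hnt'),
    ← tsum_mul_left]
  simp only [signedTheta_term_mul_add]
  rw [← tsum_comp_add_sub _ fun m n h => by simp [h.neg_one_zpow]]
  refine tsum_congr fun ⟨u, v⟩ => ?_
  have hs0 : s ≠ 0 := by rintro rfl; simp at hs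
  have ht0 : t ≠ 0 := by rintro rfl; simp at ht
  rw [show u + v + (u - v) = 2 * u by ring, (even_two_mul u).neg_one_zpow,
    natAbs_add_sq_add_natAbs_sub_sq, zpow_add_mul_zpow_sub hs0 ht0, pow_add, pow_mul, pow_mul]
  ring

theorem theta_agm_step (q : ℝ) (hq0 : 0 < q) (hq1 : q < 1) :
    (theta3 q ^ 2 + theta4 q ^ 2) / 2 = theta3 (q ^ 2) ^ 2 ∧
      Real.sqrt (theta3 q ^ 2 * theta4 q ^ 2) = theta4 (q ^ 2) ^ 2 := by
  have hq : |q| < 1 := abs_lt.mpr ⟨by linarith, hq1⟩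
  have hone : |(1 : ℝ)| = 1 := abs_one
  have hnegone : |(-1 : ℝ)| = 1 := by norm_num
  have h_sum := signedTheta_mul_add_signedTheta_mul hone hone hq
  have h_prod := signedTheta_mul_add_signedTheta_mul hone hnegone hq
  simp only [neg_neg, mul_one, div_one, one_mul, div_neg] at h_sum h_prod
  have h_prod' : signedTheta 1 q * signedTheta (-1) q = signedTheta (-1) (q ^ 2) ^ 2 := by
    linear_combination h_prod / 2
  simp only [theta3_eq_signedTheta, theta4_eq_signedTheta]
  constructor
  · linear_combination h_sum / 2
  · rw [← mul_pow, Real.sqrt_sq_eq_abs, h_prod', abs_sq]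
end

section
/- The series 2√3 · Σ_{j=0}^∞ (−1)^j / ((2j+1)·3^j) converges to π. -/
open Real

theorem hasSum_sqrt_mul_arctan_inv_sqrt {c : ℝ} (hc : 1 < c) :
    HasSum (fun j : ℕ => (-1 : ℝ) ^ j / ((2 * j + 1) * c ^ j)) (√c * arctan (√c)⁻¹) := by
  have hsqrt : 1 < √c := by rwa [lt_sqrt zero_le_one, one_pow]
  have hx : ‖(√c)⁻¹‖ < 1 := by
    rw [norm_inv, norm_of_nonneg (sqrt_nonneg c)]
    exact inv_lt_one_of_one_lt₀ hsqrt
  refine ((hasSum_arctan hx).mul_left √c).congr_fun fun j => ?_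
  have hpow : (√c)⁻¹ ^ (2 * j + 1) = (√c)⁻¹ / c ^ j := by
    rw [pow_succ', pow_mul, inv_pow, sq_sqrt (by linarith), inv_pow, div_eq_mul_inv]
  rw [hpow]
  field_simp
  push_cast
  ring

theorem madhava_series :
    HasSum (fun j : ℕ => 2 * Real.sqrt 3 * ((-1 : ℝ) ^ j / ((2 * j + 1) * 3 ^ j))) π := by
  have h := (hasSum_sqrt_mul_arctan_inv_sqrt (by norm_num : (1 : ℝ) < 3)).mul_left (2 * √3)
  rwa [arctan_inv_sqrt_three, ← mul_assoc, mul_assoc 2, mul_self_sqrt (by norm_num),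
    show (2 : ℝ) * 3 * (π / 6) = π by ring] at h
end

section
/- Let (a_n, b_n, c_n, s_n) be the Gauss-Legendre iterates: a_0 = 1, b_0 = 1/√2, s_0 = 1/4, a_{n+1} = (a_n+b_n)/2, b_{n+1} = sqrt(a_n b_n), c_{n+1} = a_n − a_{n+1}, s_{n+1} = s_n − 2^n c_{n+1}². Let (k_n, α_n) be the Borwein BB2 iterates: α_0 = 6 − 4√2, k_0 = 3 − 2√2, k_{n+1} = (1 − sqrt(1 − k_n²))/(1 + sqrt(1 − k_n²)), α_{n+1} = (1 + k_{n+1})² α_n − 2^{n+2} k_{n+1}. Then for all n ≥ 0, s_n = a_{n+1}² · α_n, i.e. 1/α_n = a_{n+1}²/s_n. -/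
/-!
With `r(x, y) = (x - y) / (x + y)`, the Landen map `k ↦ (1 - √(1 - k²)) / (1 + √(1 - k²))` sends
`r(x, y)` to `r((x + y) / 2, √(x y))`, so the BB2 modulus is `k n = r(a n, b n) = c (n + 1) / a (n + 1)`.
Hence `a (n + 2) (1 + k (n + 1)) = a (n + 1)` and `4 a (n + 2)² k (n + 1) = a (n + 1)² - b (n + 1)² = c (n + 1)²`,
and multiplying the BB2 recursion for `α (n + 1)` by `a (n + 2)²` turns it into the Gauss–Legendre
recursion for `s (n + 1)`.
-/

noncomputable section

open Real

def agmRatio (x y : ℝ) : ℝ := (x - y) / (x + y)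

def landen (k : ℝ) : ℝ := (1 - √(1 - k ^ 2)) / (1 + √(1 - k ^ 2))

lemma sqrt_one_sub_agmRatio_sq {x y : ℝ} (hx : 0 ≤ x) (hy : 0 ≤ y) (hxy : 0 < x + y) :
    √(1 - agmRatio x y ^ 2) = 2 * √(x * y) / (x + y) := by
  have h : 1 - agmRatio x y ^ 2 = (2 * √(x * y) / (x + y)) ^ 2 := by
    rw [agmRatio, div_pow, div_pow, mul_pow, sq_sqrt (mul_nonneg hx hy)]
    field_simp
    ring
  rw [h, sqrt_sq (by positivity)]

lemma landen_agmRatio {x y : ℝ} (hx : 0 ≤ x) (hy : 0 ≤ y) (hxy : 0 < x + y) :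
    landen (agmRatio x y) = agmRatio ((x + y) / 2) √(x * y) := by
  rw [landen, sqrt_one_sub_agmRatio_sq hx hy hxy, agmRatio]
  field_simp

lemma half_add_mul_one_add_agmRatio {x y : ℝ} (hxy : x + y ≠ 0) :
    (x + y) / 2 * (1 + agmRatio x y) = x := by
  rw [agmRatio]
  field_simp
  ring

lemma four_mul_half_add_sq_mul_agmRatio (x y : ℝ) :
    4 * ((x + y) / 2) ^ 2 * agmRatio x y = x ^ 2 - y ^ 2 := by
  rcases eq_or_ne (x + y) 0 with h | h
  · rw [agmRatio, h, show y = -x by linarith]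
    ring
  · rw [agmRatio]
    field_simp
    ring

lemma half_add_sq_sub_sqrt_mul_sq {x y : ℝ} (hxy : 0 ≤ x * y) :
    ((x + y) / 2) ^ 2 - √(x * y) ^ 2 = ((x - y) / 2) ^ 2 := by
  rw [sq_sqrt hxy]
  ring

lemma agm_pos (a b : ℕ → ℝ) (ha0 : 0 < a 0) (hb0 : 0 < b 0)
    (ha : ∀ n, a (n + 1) = (a n + b n) / 2) (hb : ∀ n, b (n + 1) = √(a n * b n)) :
    ∀ n, 0 < a n ∧ 0 < b n := by
  intro n
  induction n with
  | zero => exact ⟨ha0, hb0⟩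
  | succ n ih =>
    rw [ha, hb]
    exact ⟨by linarith [ih.1, ih.2], sqrt_pos.mpr (mul_pos ih.1 ih.2)⟩

lemma eq_agmRatio_of_landen (a b k : ℕ → ℝ) (hpos : ∀ n, 0 < a n ∧ 0 < b n)
    (ha : ∀ n, a (n + 1) = (a n + b n) / 2) (hb : ∀ n, b (n + 1) = √(a n * b n))
    (hk0 : k 0 = agmRatio (a 0) (b 0)) (hk : ∀ n, k (n + 1) = landen (k n)) :
    ∀ n, k n = agmRatio (a n) (b n) := by
  intro n
  induction n with
  | zero => exact hk0
  | succ n ih =>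
    obtain ⟨han, hbn⟩ := hpos n
    rw [hk, ih, ha, hb, landen_agmRatio han.le hbn.le (by linarith)]

lemma agmRatio_one_inv_sqrt_two : agmRatio 1 (1 / √2) = 3 - 2 * √2 := by
  have h2 : √2 ^ 2 = 2 := sq_sqrt (by norm_num)
  rw [agmRatio]
  field_simp
  linear_combination 2 * h2

theorem GL_equiv_BB2 (a b c s k α : ℕ → ℝ)
    (ha0 : a 0 = 1) (hb0 : b 0 = 1 / Real.sqrt 2) (hs0 : s 0 = 1 / 4)
    (ha : ∀ n, a (n + 1) = (a n + b n) / 2)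
    (hb : ∀ n, b (n + 1) = Real.sqrt (a n * b n))
    (hc : ∀ n, c (n + 1) = a n - a (n + 1))
    (hs : ∀ n, s (n + 1) = s n - 2 ^ n * c (n + 1) ^ 2)
    (hα0 : α 0 = 6 - 4 * Real.sqrt 2) (hk0 : k 0 = 3 - 2 * Real.sqrt 2)
    (hk : ∀ n, k (n + 1) = (1 - Real.sqrt (1 - k n ^ 2)) / (1 + Real.sqrt (1 - k n ^ 2)))
    (hα : ∀ n, α (n + 1) = (1 + k (n + 1)) ^ 2 * α n - 2 ^ (n + 2) * k (n + 1)) :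
    ∀ n, s n = a (n + 1) ^ 2 * α n := by
  have hpos := agm_pos a b (by rw [ha0]; norm_num) (by rw [hb0]; positivity) ha hb
  have hkr := eq_agmRatio_of_landen a b k hpos ha hb
    (by rw [hk0, ha0, hb0, agmRatio_one_inv_sqrt_two]) hk
  intro n
  induction n with
  | zero =>
    have h2 : √2 ^ 2 = 2 := sq_sqrt (by norm_num)
    rw [hs0, hα0, ha, ha0, hb0]
    field_simp
    linear_combination (12 + 16 * √2) * h2
  | succ n ih =>
    have hsum : a (n + 1) + b (n + 1) ≠ 0 := by linarith [hpos (n + 1)]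
    have hratio : a (n + 2) * (1 + k (n + 1)) = a (n + 1) := by
      rw [hkr, ha (n + 1)]
      exact half_add_mul_one_add_agmRatio hsum
    have hcsq : 4 * a (n + 2) ^ 2 * k (n + 1) = c (n + 1) ^ 2 := by
      have hab := mul_pos (hpos n).1 (hpos n).2
      rw [hkr, ha (n + 1), four_mul_half_add_sq_mul_agmRatio, hc, ha n, hb n,
        half_add_sq_sub_sqrt_mul_sq hab.le]
      ring
    rw [hs, hα, ih, ← hratio, ← hcsq]
    ring
end
end
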